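/- Let z : Fin 5 → ℂ have all coordinates nonzero and pairwise distinct norms (|z i| ≠ |z j| for i ≠ j). Let σ be a permutation of Fin 5 and ζ : Fin 5 → ℂ with (ζ i)⁵ = 1 for all i, and set w := (fun i => ζ i * z (σ i)). Suppose τ₁ and τ₂ are permutations of Fin 5 such that i < j implies |z (τ₁ j)| < |z (τ₁ i)| and |w (τ₂ j)| < |w (τ₂ i)| (τ₁ sorts z and τ₂ sorts w in strictly descending norm order). Then, with f(v) := |v| · exp(I · (arg(v) mod 2π/5)) (where θ mod 2π/5 := θ − (2π/5)⌊θ/(2π/5)⌋), one has f(w (τ₂ k)) = f(z (τ₁ k)) for every k ∈ Fin 5. That is, the composite canonicalization h_RootSc ∘ h_perm applied to any (S₅ ⋉ ℤ₅⁵)-transform of z yields the same output as applied to z itself. -/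

import Mathlib

/-- `θ mod (2π/5) = θ − (2π/5)·⌊θ/(2π/5)⌋`. -/
noncomputable def modAngle (θ : ℝ) : ℝ := θ - (2 * Real.pi / 5) * (⌊θ / (2 * Real.pi / 5)⌋ : ℝ)

/-- The root-scaling canonicalization `f v = |v| · exp(I·(arg v mod 2π/5))`. -/
noncomputable def rootScCanon (v : ℂ) : ℂ :=
  (‖v‖ : ℂ) * Complex.exp (Complex.I * (modAngle (Complex.arg v) : ℂ))

/-!
Sorting by strictly decreasing norm is unique and fifth roots of unity preserve norms, so
`τ₁ = σ ∘ τ₂`, and the two sorted tuples agree coordinatewise up to fifth roots of unity. Such a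
root shifts the argument by a multiple of `2π/5`, which `modAngle` forgets.
-/

theorem Equiv.Perm.eq_of_strictAnti_comp {α : Type*} [PartialOrder α] {n : ℕ}
    {f : Fin n → α} {σ τ : Equiv.Perm (Fin n)}
    (hσ : StrictAnti (f ∘ σ)) (hτ : StrictAnti (f ∘ τ)) : σ = τ := by
  have hcomp : f ∘ σ = f ∘ τ := Tuple.unique_antitone hσ.antitone hτ.antitone
  have hf : Function.Injective f := by
    simpa [Function.comp_assoc] using hσ.injective.comp (σ.symm.injective)
  exact Equiv.ext fun i => hf (congrFun hcomp i)

theorem modAngle_add_mul_intCast (θ : ℝ) (m : ℤ) :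
    modAngle (θ + 2 * Real.pi / 5 * m) = modAngle θ := by
  have hdiv : (θ + 2 * Real.pi / 5 * m) / (2 * Real.pi / 5) = θ / (2 * Real.pi / 5) + m := by
    field_simp
  rw [modAngle, modAngle, hdiv, Int.floor_add_intCast]
  push_cast
  ring

theorem Complex.exists_arg_mul_eq_of_pow_eq_one {u v : ℂ} {n : ℕ} (hu : u ^ n = 1) (hn : n ≠ 0)
    (hv : v ≠ 0) : ∃ m : ℤ, Complex.arg (u * v) = Complex.arg v + 2 * Real.pi / n * m := by
  have hu0 : u ≠ 0 := by rintro rfl; simp [zero_pow hn] at hu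
  have hnarg : n • (Complex.arg u : Real.Angle) = n • (0 : Real.Angle) := by
    rw [← Complex.arg_pow_coe_angle, hu, Complex.arg_one, smul_zero, Real.Angle.coe_zero]
  obtain ⟨k, hk⟩ := (Real.Angle.nsmul_eq_iff hn).mp hnarg
  have hangle : (Complex.arg (u * v) : Real.Angle) =
      (Complex.arg v + (k : ℕ) * (2 * Real.pi / n) : ℝ) := by
    rw [Complex.arg_mul_coe_angle hu0 hv, hk, zero_add, Real.Angle.coe_add, add_comm,
      ← nsmul_eq_mul, Real.Angle.coe_nsmul]
  obtain ⟨j, hj⟩ := Real.Angle.angle_eq_iff_two_pi_dvd_sub.mp hangle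
  refine ⟨k + n * j, ?_⟩
  rw [eq_add_of_sub_eq' hj]
  push_cast
  field_simp
  ring

theorem rootScCanon_mul_of_pow_eq_one {u : ℂ} (hu : u ^ 5 = 1) (v : ℂ) :
    rootScCanon (u * v) = rootScCanon v := by
  rcases eq_or_ne v 0 with rfl | hv
  · rw [mul_zero]
  obtain ⟨m, hm⟩ := Complex.exists_arg_mul_eq_of_pow_eq_one hu (by norm_num) hv
  push_cast at hm
  rw [rootScCanon, rootScCanon, hm, modAngle_add_mul_intCast, norm_mul,
    Complex.norm_eq_one_of_pow_eq_one hu (by norm_num), one_mul]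

theorem rootSc_perm_canonicalization_invariant_general
    (z : Fin 5 → ℂ)
    (σ : Equiv.Perm (Fin 5)) (ζ : Fin 5 → ℂ) (hζ : ∀ i, (ζ i) ^ 5 = 1)
    (τ₁ τ₂ : Equiv.Perm (Fin 5))
    (hτ₁ : ∀ i j : Fin 5, i < j → ‖z (τ₁ j)‖ < ‖z (τ₁ i)‖)
    (hτ₂ : ∀ i j : Fin 5, i < j →
      ‖(fun i => ζ i * z (σ i)) (τ₂ j)‖ <
        ‖(fun i => ζ i * z (σ i)) (τ₂ i)‖) :
    ∀ k : Fin 5, rootScCanon ((fun i => ζ i * z (σ i)) (τ₂ k)) = rootScCanon (z (τ₁ k)) := by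
  have hw_norm : ∀ i, ‖ζ i * z (σ i)‖ = ‖z (σ i)‖ := fun i => by
    rw [norm_mul, Complex.norm_eq_one_of_pow_eq_one (hζ i) (by norm_num), one_mul]
  have hsorted : StrictAnti ((fun i => ‖z i‖) ∘ τ₂.trans σ) := fun i j hij => by
    have := hτ₂ i j hij
    simp only [hw_norm] at this
    exact this
  have hτ : τ₁ = τ₂.trans σ := Equiv.Perm.eq_of_strictAnti_comp (f := fun i => ‖z i‖) hτ₁ hsorted
  intro k
  rw [hτ]
  exact rootScCanon_mul_of_pow_eq_one (hζ _) _

/-- The composition `h_RootSc ∘ h_perm` is invariant under the action of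
`S₅ ⋉ ℤ₅⁵` on tuples `z : Fin 5 → ℂ` with nonzero coordinates of pairwise
distinct norms: if `w i = ζ i * z (σ i)` with `(ζ i)⁵ = 1`, and `τ₁`, `τ₂` sort
`z` and `w` respectively in strictly descending norm order, then the
canonicalized outputs agree. -/
theorem rootSc_perm_canonicalization_invariant
    (z : Fin 5 → ℂ) (hz : ∀ i, z i ≠ 0)
    (hnorm : ∀ i j : Fin 5, i ≠ j → ‖z i‖ ≠ ‖z j‖)
    (σ : Equiv.Perm (Fin 5)) (ζ : Fin 5 → ℂ) (hζ : ∀ i, (ζ i) ^ 5 = 1)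
    (τ₁ τ₂ : Equiv.Perm (Fin 5))
    (hτ₁ : ∀ i j : Fin 5, i < j → ‖z (τ₁ j)‖ < ‖z (τ₁ i)‖)
    (hτ₂ : ∀ i j : Fin 5, i < j →
      ‖(fun i => ζ i * z (σ i)) (τ₂ j)‖ <
        ‖(fun i => ζ i * z (σ i)) (τ₂ i)‖) :
    ∀ k : Fin 5, rootScCanon ((fun i => ζ i * z (σ i)) (τ₂ k)) = rootScCanon (z (τ₁ k)) :=
  rootSc_perm_canonicalization_invariant_general z σ ζ hζ τ₁ τ₂ hτ₁ hτ₂
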